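/- Let R be an invertible Yang-Baxter operator on a k-module V and let φ be a 2-cochain. Set R̃ = R + ℏφ acting on Ṽ = (k[ℏ]/(ℏ²)) ⊗ V. Then R̃ satisfies the Yang-Baxter equation on Ṽ if and only if φ is a Yang-Baxter 2-cocycle for R, i.e. (R⊗1)(1⊗R)(φ⊗1) + (R⊗1)(1⊗φ)(R⊗1) + (φ⊗1)(1⊗R)(R⊗1) = (1⊗R)(R⊗1)(1⊗φ) + (1⊗R)(φ⊗1)(1⊗R) + (1⊗φ)(R⊗1)(1⊗R). -/
import Mathlib
set_option maxHeartbeats 1000000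
set_option synthInstance.maxHeartbeats 1000000

open TensorProduct

/-- `R ⊗ 1` acting on `(W ⊗ W) ⊗ W`. -/
noncomputable def sig1 (S : Type*) [CommRing S] (W : Type*) [AddCommGroup W] [Module S W]
    (R : W ⊗[S] W →ₗ[S] W ⊗[S] W) :
    (W ⊗[S] W) ⊗[S] W →ₗ[S] (W ⊗[S] W) ⊗[S] W :=
  LinearMap.rTensor W R

/-- `1 ⊗ R` acting on `(W ⊗ W) ⊗ W`. -/
noncomputable def sig2 (S : Type*) [CommRing S] (W : Type*) [AddCommGroup W] [Module S W]
    (R : W ⊗[S] W →ₗ[S] W ⊗[S] W) :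
    (W ⊗[S] W) ⊗[S] W →ₗ[S] (W ⊗[S] W) ⊗[S] W :=
  (TensorProduct.assoc S W W W).symm.toLinearMap ∘ₗ LinearMap.lTensor W R ∘ₗ
    (TensorProduct.assoc S W W W).toLinearMap

/-- The Yang-Baxter equation for an operator on `W ⊗ W`. -/
def IsYangBaxter (S : Type*) [CommRing S] (W : Type*) [AddCommGroup W] [Module S W]
    (R : W ⊗[S] W →ₗ[S] W ⊗[S] W) : Prop :=
  sig1 S W R ∘ₗ sig2 S W R ∘ₗ sig1 S W R = sig2 S W R ∘ₗ sig1 S W R ∘ₗ sig2 S W R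

/-- The infinitesimal deformation `R̃ = R + ℏφ` acting on `Ṽ ⊗ Ṽ`,
where `Ṽ = (k[ℏ]/(ℏ²)) ⊗ V` and `k[ℏ]/(ℏ²)` is realized as the dual numbers over `k`. -/
noncomputable def deformedR (k : Type*) [CommRing k] (V : Type*) [AddCommGroup V] [Module k V]
    (R φ : V ⊗[k] V →ₗ[k] V ⊗[k] V) :
    ((DualNumber k ⊗[k] V) ⊗[DualNumber k] (DualNumber k ⊗[k] V)) →ₗ[DualNumber k]
      ((DualNumber k ⊗[k] V) ⊗[DualNumber k] (DualNumber k ⊗[k] V)) :=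
  (TensorProduct.AlgebraTensorModule.distribBaseChange k (DualNumber k) V V).toLinearMap ∘ₗ
    (LinearMap.baseChange (DualNumber k) R + (DualNumber.eps : DualNumber k) • LinearMap.baseChange (DualNumber k) φ) ∘ₗ
    (TensorProduct.AlgebraTensorModule.distribBaseChange k (DualNumber k) V V).symm.toLinearMap

section Aux

variable (k : Type*) [CommRing k] (V : Type*) [AddCommGroup V] [Module k V]

local notation "D" => DualNumber k
local notation "ε" => (DualNumber.eps : DualNumber k)

/-- `distribBaseChange` on an element with arbitrary left component. -/
theorem distrib_tmul {M N : Type*} [AddCommGroup M] [Module k M] [AddCommGroup N] [Module k N]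
    (a : D) (m : M) (n : N) :
    TensorProduct.AlgebraTensorModule.distribBaseChange k D M N (a ⊗ₜ (m ⊗ₜ n))
      = (a ⊗ₜ m) ⊗ₜ (1 ⊗ₜ n) := rfl

theorem distrib_symm_tmul {M N : Type*} [AddCommGroup M] [Module k M] [AddCommGroup N] [Module k N]
    (a b : D) (m : M) (n : N) :
    (TensorProduct.AlgebraTensorModule.distribBaseChange k D M N).symm ((a ⊗ₜ m) ⊗ₜ (b ⊗ₜ n))
      = (b * a) ⊗ₜ (m ⊗ₜ n) := rfl

/-- The base-change iso for `V ⊗ V`. -/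
noncomputable def ee : D ⊗[k] (V ⊗[k] V) ≃ₗ[D] (D ⊗[k] V) ⊗[D] (D ⊗[k] V) :=
  TensorProduct.AlgebraTensorModule.distribBaseChange k D V V

/-- The base-change iso for `(V ⊗ V) ⊗ V`. -/
noncomputable def EE : D ⊗[k] ((V ⊗[k] V) ⊗[k] V) ≃ₗ[D]
    ((D ⊗[k] V) ⊗[D] (D ⊗[k] V)) ⊗[D] (D ⊗[k] V) :=
  (TensorProduct.AlgebraTensorModule.distribBaseChange k D (V ⊗[k] V) V).trans
    (TensorProduct.congr (ee k V) (LinearEquiv.refl D (D ⊗[k] V)))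

/-- Conjugation of base-changed endomorphisms of `(V⊗V)⊗V` by `EE`. -/
noncomputable def Phi (g : (V ⊗[k] V) ⊗[k] V →ₗ[k] (V ⊗[k] V) ⊗[k] V) :
    ((D ⊗[k] V) ⊗[D] (D ⊗[k] V)) ⊗[D] (D ⊗[k] V) →ₗ[D]
    ((D ⊗[k] V) ⊗[D] (D ⊗[k] V)) ⊗[D] (D ⊗[k] V) :=
  (EE k V).toLinearMap ∘ₗ LinearMap.baseChange D g ∘ₗ (EE k V).symm.toLinearMap

theorem Phi_comp (g h : (V ⊗[k] V) ⊗[k] V →ₗ[k] (V ⊗[k] V) ⊗[k] V) :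
    Phi k V g ∘ₗ Phi k V h = Phi k V (g ∘ₗ h) := by
  apply LinearMap.ext; intro x
  simp [Phi, LinearMap.baseChange_comp]

theorem Phi_add (g h : (V ⊗[k] V) ⊗[k] V →ₗ[k] (V ⊗[k] V) ⊗[k] V) :
    Phi k V (g + h) = Phi k V g + Phi k V h := by
  simp only [Phi, LinearMap.baseChange_add, LinearMap.add_comp, LinearMap.comp_add]

theorem sig1_conj (f : V ⊗[k] V →ₗ[k] V ⊗[k] V) :
    sig1 D (D ⊗[k] V)
        ((ee k V).toLinearMap ∘ₗ LinearMap.baseChange D f ∘ₗ (ee k V).symm.toLinearMap)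
      = Phi k V (sig1 k V f) := by
  rw [Phi]
  conv_rhs => rw [← LinearMap.comp_assoc]
  rw [LinearEquiv.eq_comp_toLinearMap_symm]
  ext x y z
  simp [EE, ee, sig1, distrib_tmul, distrib_symm_tmul]

set_option maxHeartbeats 1000000 in
set_option synthInstance.maxHeartbeats 400000 in
theorem sig2_conj (f : V ⊗[k] V →ₗ[k] V ⊗[k] V) :
    sig2 D (D ⊗[k] V)
        ((ee k V).toLinearMap ∘ₗ LinearMap.baseChange D f ∘ₗ (ee k V).symm.toLinearMap)
      = Phi k V (sig2 k V f) := by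
  rw [Phi]
  conv_rhs => rw [← LinearMap.comp_assoc]
  rw [LinearEquiv.eq_comp_toLinearMap_symm]
  ext x y z
  simp [sig2, EE, ee, distrib_tmul, distrib_symm_tmul]
  induction f (y ⊗ₜ z) using TensorProduct.induction_on with
  | zero => simp only [tmul_zero, map_zero, zero_tmul]
  | tmul u v => simp [distrib_tmul]
  | add s t hs ht => simp only [tmul_add, add_tmul, map_add, hs, ht]

/-- `sig1` of a sum with scalar. -/
theorem sig1_add_smul (c : DualNumber k)
    (g h : (D ⊗[k] V) ⊗[D] (D ⊗[k] V) →ₗ[D] (D ⊗[k] V) ⊗[D] (D ⊗[k] V)) :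
    sig1 D (D ⊗[k] V) (g + c • h) = sig1 D (D ⊗[k] V) g + c • sig1 D (D ⊗[k] V) h := by
  simp only [sig1, LinearMap.rTensor_add, LinearMap.rTensor_smul]

theorem sig2_add_smul (c : DualNumber k)
    (g h : (D ⊗[k] V) ⊗[D] (D ⊗[k] V) →ₗ[D] (D ⊗[k] V) ⊗[D] (D ⊗[k] V)) :
    sig2 D (D ⊗[k] V) (g + c • h) = sig2 D (D ⊗[k] V) g + c • sig2 D (D ⊗[k] V) h := by
  apply LinearMap.ext; intro t
  simp [sig2, LinearMap.lTensor_add, LinearMap.lTensor_smul]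

theorem deformedR_eq (R φ : V ⊗[k] V →ₗ[k] V ⊗[k] V) :
    deformedR k V R φ =
      ((ee k V).toLinearMap ∘ₗ LinearMap.baseChange D R ∘ₗ (ee k V).symm.toLinearMap)
        + ε • ((ee k V).toLinearMap ∘ₗ LinearMap.baseChange D φ ∘ₗ (ee k V).symm.toLinearMap) := by
  apply LinearMap.ext; intro t
  simp [deformedR, ee]

theorem sig1_deformed (R φ : V ⊗[k] V →ₗ[k] V ⊗[k] V) :
    sig1 D (D ⊗[k] V) (deformedR k V R φ)
      = Phi k V (sig1 k V R) + ε • Phi k V (sig1 k V φ) := by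
  rw [deformedR_eq, sig1_add_smul, sig1_conj, sig1_conj]

theorem sig2_deformed (R φ : V ⊗[k] V →ₗ[k] V ⊗[k] V) :
    sig2 D (D ⊗[k] V) (deformedR k V R φ)
      = Phi k V (sig2 k V R) + ε • Phi k V (sig2 k V φ) := by
  rw [deformedR_eq, sig2_add_smul, sig2_conj, sig2_conj]

/-- `f ↦ ε • baseChange f` is injective. -/
theorem eps_smul_baseChange_eq_zero {M N : Type*} [AddCommGroup M] [Module k M]
    [AddCommGroup N] [Module k N] (f : M →ₗ[k] N)
    (h : (ε • LinearMap.baseChange D f : D ⊗[k] M →ₗ[D] D ⊗[k] N) = 0) : f = 0 := by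
  ext x
  have h1 := congrArg (fun g : D ⊗[k] M →ₗ[D] D ⊗[k] N => g ((1 : D) ⊗ₜ x)) h
  simp only [LinearMap.smul_apply, LinearMap.baseChange_tmul, LinearMap.zero_apply] at h1
  have h2 : (ε : D) ⊗ₜ[k] f x = (0 : D ⊗[k] N) := by
    rw [← h1, TensorProduct.smul_tmul', smul_eq_mul, mul_one]
  have h3 := congrArg ((TensorProduct.lid k N).toLinearMap ∘ₗ
      LinearMap.rTensor N (TrivSqZeroExt.sndHom k k)) h2
  simpa using h3

theorem expand_cube {S X : Type*} [CommRing S] [AddCommGroup X] [Module S X] (c : S)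
    (hc : c * c = 0) (x1 x2 y1 y2 : X →ₗ[S] X) :
    (x1 + c • y1) ∘ₗ (x2 + c • y2) ∘ₗ (x1 + c • y1)
      = x1 ∘ₗ x2 ∘ₗ x1
        + c • (x1 ∘ₗ x2 ∘ₗ y1 + x1 ∘ₗ y2 ∘ₗ x1 + y1 ∘ₗ x2 ∘ₗ x1) := by
  apply LinearMap.ext; intro t
  simp only [LinearMap.add_comp, LinearMap.comp_add, LinearMap.smul_comp, LinearMap.comp_smul,
    smul_smul, hc, zero_smul, LinearMap.add_apply, LinearMap.smul_apply, smul_add,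
    LinearMap.zero_apply, add_zero, zero_add, LinearMap.comp_apply]
  abel

theorem expand_cubeD (c : DualNumber k) (hc : c * c = 0)
    (x1 x2 y1 y2 : ((D ⊗[k] V) ⊗[D] (D ⊗[k] V)) ⊗[D] (D ⊗[k] V) →ₗ[D]
      ((D ⊗[k] V) ⊗[D] (D ⊗[k] V)) ⊗[D] (D ⊗[k] V)) :
    (x1 + c • y1) ∘ₗ (x2 + c • y2) ∘ₗ (x1 + c • y1)
      = x1 ∘ₗ x2 ∘ₗ x1
        + c • (x1 ∘ₗ x2 ∘ₗ y1 + x1 ∘ₗ y2 ∘ₗ x1 + y1 ∘ₗ x2 ∘ₗ x1) := by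
  apply LinearMap.ext; intro t
  simp only [LinearMap.add_comp, LinearMap.comp_add, LinearMap.smul_comp, LinearMap.comp_smul,
    smul_smul, hc, zero_smul, LinearMap.add_apply, LinearMap.smul_apply, smul_add,
    LinearMap.zero_apply, add_zero, zero_add, LinearMap.comp_apply]
  abel

end Aux

/-- If `R` is an invertible Yang-Baxter operator and `φ` a 2-cochain, then
`R̃ = R + ℏφ` on `Ṽ = (k[ℏ]/(ℏ²)) ⊗ V` satisfies the Yang-Baxter equation iff `φ` is a
Yang-Baxter 2-cocycle for `R`. -/
theorem deformation_yang_baxter_iff_cocycle (k : Type*) [CommRing k] (V : Type*)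
    [AddCommGroup V] [Module k V] (R R' φ : V ⊗[k] V →ₗ[k] V ⊗[k] V)
    (hYB : IsYangBaxter k V R)
    (hinv : R ∘ₗ R' = LinearMap.id ∧ R' ∘ₗ R = LinearMap.id) :
    IsYangBaxter (DualNumber k) (DualNumber k ⊗[k] V) (deformedR k V R φ) ↔
      sig1 k V R ∘ₗ sig2 k V R ∘ₗ sig1 k V φ
          + sig1 k V R ∘ₗ sig2 k V φ ∘ₗ sig1 k V R
          + sig1 k V φ ∘ₗ sig2 k V R ∘ₗ sig1 k V R
        = sig2 k V R ∘ₗ sig1 k V R ∘ₗ sig2 k V φ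
          + sig2 k V R ∘ₗ sig1 k V φ ∘ₗ sig2 k V R
          + sig2 k V φ ∘ₗ sig1 k V R ∘ₗ sig2 k V R := by
  have e2 : (DualNumber.eps : DualNumber k) * DualNumber.eps = 0 := DualNumber.eps_mul_eps
  have hYB' : sig1 k V R ∘ₗ sig2 k V R ∘ₗ sig1 k V R
      = sig2 k V R ∘ₗ sig1 k V R ∘ₗ sig2 k V R := hYB
  unfold IsYangBaxter
  rw [sig1_deformed, sig2_deformed]
  rw [expand_cubeD k V _ e2, expand_cubeD k V _ e2]
  simp only [Phi_comp, ← Phi_add]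
  rw [hYB']
  set Q := sig1 k V R ∘ₗ sig2 k V R ∘ₗ sig1 k V φ
      + sig1 k V R ∘ₗ sig2 k V φ ∘ₗ sig1 k V R
      + sig1 k V φ ∘ₗ sig2 k V R ∘ₗ sig1 k V R with hQ
  set Q' := sig2 k V R ∘ₗ sig1 k V R ∘ₗ sig2 k V φ
      + sig2 k V R ∘ₗ sig1 k V φ ∘ₗ sig2 k V R
      + sig2 k V φ ∘ₗ sig1 k V R ∘ₗ sig2 k V R with hQ'
  constructor
  · intro h
    apply LinearMap.ext; intro w
    have h2 := congrArg (fun g : _ →ₗ[DualNumber k] _ =>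
      (EE k V).symm (g ((EE k V) ((1 : DualNumber k) ⊗ₜ w)))) h
    simp only [Phi, LinearMap.add_apply, LinearMap.smul_apply, LinearMap.coe_comp,
      Function.comp_apply, LinearEquiv.coe_coe, LinearEquiv.symm_apply_apply, map_add, map_smul,
      LinearMap.baseChange_tmul] at h2
    simp only [TensorProduct.smul_tmul', smul_eq_mul, mul_one] at h2
    have h3 := congrArg ((TensorProduct.lid k ((V ⊗[k] V) ⊗[k] V)).toLinearMap ∘ₗ
      LinearMap.rTensor ((V ⊗[k] V) ⊗[k] V) (TrivSqZeroExt.sndHom k k)) h2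
    simpa using h3
  · intro h
    rw [h]
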